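/- Let (F, m, η; δ, ε) be a weak Frobenius monad and suppose the idempotent m·Fη = Fε·δ splits as F →p underline{F} →i F. Then underline{F}, with the induced monad structure (underline{m} = p·m·ii, underline{η} = p·η) and comonad structure (underline{δ} = pp·δ·i, underline{ε} = ε·i), is a (proper) Frobenius monad: underline{F} is a monad, a comonad, and satisfies underline{δ}·underline{m} = underline{F}underline{m}·underline{δ}underline{F} = underline{m}underline{F}·underline{F}underline{δ}. -/
import Mathlib


open CategoryTheory

universe v u

section

variable {B : Type u} [Category.{v} B]

def splitProd (F F' : B ⥤ B) (m : F ⋙ F ⟶ F) (p : F ⟶ F') (i : F' ⟶ F) (X : B) :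
    F'.obj (F'.obj X) ⟶ F'.obj X :=
  i.app (F'.obj X) ≫ F.map (i.app X) ≫ m.app X ≫ p.app X

def splitUnit (F F' : B ⥤ B) (η : 𝟭 B ⟶ F) (p : F ⟶ F') (X : B) :
    X ⟶ F'.obj X :=
  η.app X ≫ p.app X

def splitCoprod (F F' : B ⥤ B) (δ : F ⟶ F ⋙ F) (p : F ⟶ F') (i : F' ⟶ F) (X : B) :
    F'.obj X ⟶ F'.obj (F'.obj X) :=
  i.app X ≫ δ.app X ≫ F.map (p.app X) ≫ p.app (F'.obj X)

def splitCounit (F F' : B ⥤ B) (ε : F ⟶ 𝟭 B) (i : F' ⟶ F) (X : B) :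
    F'.obj X ⟶ X :=
  i.app X ≫ ε.app X

/-- For a weak Frobenius monad `(F, m, η; δ, ε)` whose idempotent
`m·Fη = Fε·δ` splits as `F →p F' →i F`, the induced structures make `F'` a
(proper) Frobenius monad: a monad, a comonad, and the Frobenius property holds. -/
theorem split_weak_frobenius_monad_is_frobenius
    (F : B ⥤ B) (m : F ⋙ F ⟶ F) (η : 𝟭 B ⟶ F) (δ : F ⟶ F ⋙ F) (ε : F ⟶ 𝟭 B)
    -- weak monad
    (massoc : ∀ X : B, F.map (m.app X) ≫ m.app X = m.app (F.obj X) ≫ m.app X)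
    (wm1 : ∀ X : B, η.app X ≫ F.map (η.app X) ≫ m.app X = η.app X)
    (wm2 : ∀ X : B, F.map (η.app (F.obj X)) ≫ m.app (F.obj X) ≫ m.app X = m.app X)
    (wm3 : ∀ X : B, F.map (η.app X) ≫ m.app X = η.app (F.obj X) ≫ m.app X)
    -- weak comonad
    (coassoc : ∀ X : B, δ.app X ≫ F.map (δ.app X) = δ.app X ≫ δ.app (F.obj X))
    (wc1 : ∀ X : B, δ.app X ≫ F.map (ε.app X) ≫ ε.app X = ε.app X)
    (wc2 : ∀ X : B, δ.app X ≫ F.map (δ.app X) ≫ F.map (ε.app (F.obj X)) = δ.app X)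
    (wc3 : ∀ X : B, δ.app X ≫ F.map (ε.app X) = δ.app X ≫ ε.app (F.obj X))
    -- Frobenius property
    (frob₁ : ∀ X : B, m.app X ≫ δ.app X = δ.app (F.obj X) ≫ F.map (m.app X))
    (frob₂ : ∀ X : B, m.app X ≫ δ.app X = F.map (δ.app X) ≫ m.app (F.obj X))
    -- ϑ = γ
    (hϑγ : ∀ X : B, F.map (η.app X) ≫ m.app X = δ.app X ≫ F.map (ε.app X))
    -- splitting
    (F' : B ⥤ B) (p : F ⟶ F') (i : F' ⟶ F)
    (split₁ : ∀ X : B, p.app X ≫ i.app X = F.map (η.app X) ≫ m.app X)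
    (split₂ : ∀ X : B, i.app X ≫ p.app X = 𝟙 (F'.obj X)) :
    -- F' is a monad
    (∀ X : B, F'.map (splitProd F F' m p i X) ≫ splitProd F F' m p i X
        = splitProd F F' m p i (F'.obj X) ≫ splitProd F F' m p i X) ∧
    (∀ X : B, F'.map (splitUnit F F' η p X) ≫ splitProd F F' m p i X = 𝟙 (F'.obj X)) ∧
    (∀ X : B, splitUnit F F' η p (F'.obj X) ≫ splitProd F F' m p i X = 𝟙 (F'.obj X)) ∧
    -- F' is a comonad
    (∀ X : B, splitCoprod F F' δ p i X ≫ F'.map (splitCoprod F F' δ p i X)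
        = splitCoprod F F' δ p i X ≫ splitCoprod F F' δ p i (F'.obj X)) ∧
    (∀ X : B, splitCoprod F F' δ p i X ≫ F'.map (splitCounit F F' ε i X) = 𝟙 (F'.obj X)) ∧
    (∀ X : B, splitCoprod F F' δ p i X ≫ splitCounit F F' ε i (F'.obj X) = 𝟙 (F'.obj X)) ∧
    -- Frobenius property for F'
    (∀ X : B, splitProd F F' m p i X ≫ splitCoprod F F' δ p i X
        = splitCoprod F F' δ p i (F'.obj X) ≫ F'.map (splitProd F F' m p i X)) ∧
    (∀ X : B, splitProd F F' m p i X ≫ splitCoprod F F' δ p i X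
        = F'.map (splitCoprod F F' δ p i X) ≫ splitProd F F' m p i (F'.obj X)) := by
  -- naturality helpers (with `F ⋙ F` unfolded)
  have hmnat : ∀ {A C : B} (f : A ⟶ C), F.map (F.map f) ≫ m.app C = m.app A ≫ F.map f :=
    fun f => m.naturality f
  have hδnat : ∀ {A C : B} (f : A ⟶ C), F.map f ≫ δ.app C = δ.app A ≫ F.map (F.map f) :=
    fun f => δ.naturality f
  have hηnat : ∀ {A C : B} (f : A ⟶ C), f ≫ η.app C = η.app A ≫ F.map f :=
    fun f => η.naturality f
  have hεnat : ∀ {A C : B} (f : A ⟶ C), F.map f ≫ ε.app C = ε.app A ≫ f :=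
    fun f => ε.naturality f
  -- F'.map in terms of F.map
  have hF' : ∀ {A C : B} (f : A ⟶ C), F'.map f = i.app A ≫ F.map f ≫ p.app C := by
    intro A C f
    rw [← NatTrans.naturality_assoc i f, split₂, Category.comp_id]
  -- naturality of the idempotent e = p ≫ i
  have henat : ∀ {A C : B} (f : A ⟶ C),
      F.map f ≫ p.app C ≫ i.app C = p.app A ≫ i.app A ≫ F.map f := by
    intro A C f
    rw [← Category.assoc, p.naturality, Category.assoc, i.naturality, ← Category.assoc,
      Category.assoc]
  -- absorption laws
  have hM1 : ∀ X : B, p.app (F.obj X) ≫ i.app (F.obj X) ≫ m.app X = m.app X := by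
    intro X
    rw [← Category.assoc, split₁, Category.assoc]
    exact wm2 X
  have hM2 : ∀ X : B, F.map (p.app X ≫ i.app X) ≫ m.app X = m.app X ≫ p.app X ≫ i.app X := by
    intro X
    rw [split₁, F.map_comp, Category.assoc, massoc X, ← Category.assoc, hmnat (η.app X),
      Category.assoc, ← split₁]
    rfl
  have hM3 : ∀ X : B, η.app X ≫ p.app X ≫ i.app X = η.app X := by
    intro X; rw [split₁]; exact wm1 X
  have hsplit₁' : ∀ X : B, p.app X ≫ i.app X = δ.app X ≫ F.map (ε.app X) := by
    intro X; rw [split₁, hϑγ]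
  have hC1 : ∀ X : B, δ.app X ≫ p.app (F.obj X) ≫ i.app (F.obj X) = δ.app X := by
    intro X
    rw [hsplit₁' (F.obj X), ← Category.assoc, ← coassoc X, Category.assoc]
    exact wc2 X
  have hC2 : ∀ X : B, δ.app X ≫ F.map (p.app X ≫ i.app X) = p.app X ≫ i.app X ≫ δ.app X := by
    intro X
    rw [hsplit₁' X, F.map_comp, ← Category.assoc, coassoc X, Category.assoc, ← Category.assoc,
      Category.assoc, ← hδnat (ε.app X), ← Category.assoc, ← hsplit₁' X, Category.assoc]
    rfl
  have hC3 : ∀ X : B, p.app X ≫ i.app X ≫ ε.app X = ε.app X := by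
    intro X
    rw [← Category.assoc, hsplit₁' X, Category.assoc]
    exact wc1 X
  refine ⟨?_, ?_, ?_, ?_, ?_, ?_, ?_, ?_⟩
  · intro X
    simp only [splitProd, hF', Functor.map_comp, Category.assoc]
    slice_lhs 5 7 => rw [henat (p.app X)]
    slice_lhs 7 8 => rw [← F.map_comp]
    slice_lhs 5 7 => rw [← henat (p.app X ≫ i.app X)]
    slice_lhs 6 8 => rw [hM1 X]
    slice_lhs 5 6 => rw [hM2 X]
    slice_lhs 7 8 => rw [split₂ X]
    slice_lhs 4 5 => rw [massoc X]
    slice_rhs 4 6 => rw [← henat (i.app X)]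
    slice_rhs 5 7 => rw [hM1 X]
    slice_rhs 3 4 => rw [← hmnat (i.app X)]
    simp only [Category.assoc, Category.id_comp, Category.comp_id]
  · intro X
    simp only [splitProd, splitUnit, hF', Functor.map_comp, Category.assoc]
    slice_lhs 3 5 => rw [henat (p.app X)]
    slice_lhs 5 6 => rw [← F.map_comp]
    slice_lhs 3 5 => rw [← henat (p.app X ≫ i.app X)]
    slice_lhs 4 6 => rw [hM1 X]
    slice_lhs 3 4 => rw [hM2 X]
    slice_lhs 2 3 => rw [← split₁ X]
    simp only [Category.assoc]
    rw [split₂, Category.comp_id, split₂, Category.comp_id, split₂]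
  · intro X
    simp only [splitProd, splitUnit, hF', Functor.map_comp, Category.assoc]
    slice_lhs 1 3 => rw [hM3 (F'.obj X)]
    slice_lhs 1 2 => rw [← hηnat (i.app X)]
    slice_lhs 2 3 => rw [← wm3 X, ← split₁ X]
    simp only [Category.assoc]
    rw [split₂, Category.comp_id, split₂]
  · intro X
    simp only [splitCoprod, hF', Functor.map_comp, Category.assoc]
    slice_lhs 3 5 => rw [henat (p.app X)]
    slice_lhs 5 6 => rw [← F.map_comp]
    slice_lhs 2 4 => rw [hC1 X]
    slice_lhs 2 3 => rw [hC2 X]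
    slice_lhs 4 5 => rw [coassoc X]
    slice_lhs 1 3 => rw [← Category.assoc, split₂ X, Category.id_comp]
    slice_rhs 3 5 => rw [henat (p.app X)]
    slice_rhs 2 4 => rw [hC1 X]
    slice_rhs 3 4 => rw [hδnat (p.app X)]
    simp only [Category.assoc, Category.id_comp, Category.comp_id]
  · intro X
    simp only [splitCoprod, splitCounit, hF', Functor.map_comp, Category.assoc]
    slice_lhs 3 5 => rw [henat (p.app X)]
    slice_lhs 5 6 => rw [← F.map_comp]
    slice_lhs 2 4 => rw [hC1 X]
    slice_lhs 2 3 => rw [hC2 X]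
    slice_lhs 4 5 => rw [← hϑγ X, ← split₁ X]
    simp only [Category.assoc]
    rw [split₂, Category.comp_id, split₂, Category.comp_id, split₂]
  · intro X
    simp only [splitCoprod, splitCounit, hF', Functor.map_comp, Category.assoc]
    slice_lhs 4 6 => rw [hC3 (F'.obj X)]
    slice_lhs 3 4 => rw [hεnat (p.app X)]
    slice_lhs 2 3 => rw [← wc3 X, ← hϑγ X, ← split₁ X]
    simp only [Category.assoc]
    rw [split₂, Category.comp_id, split₂]
  · intro X
    simp only [splitProd, splitCoprod, hF', Functor.map_comp, Category.assoc]
    slice_lhs 4 6 => rw [← hC2 X]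
    slice_lhs 5 6 => rw [← F.map_comp, Category.assoc, split₂ X, Category.comp_id]
    slice_lhs 3 4 => rw [frob₁ X]
    slice_lhs 2 3 => rw [hδnat (i.app X)]
    slice_rhs 3 5 => rw [henat (p.app (F'.obj X))]
    slice_rhs 5 6 => rw [← F.map_comp]
    slice_rhs 2 4 => rw [hC1 (F'.obj X)]
    slice_rhs 2 3 => rw [hC2 (F'.obj X)]
    slice_rhs 1 3 => rw [← Category.assoc, split₂ (F'.obj X), Category.id_comp]
    simp only [Category.assoc, Category.id_comp, Category.comp_id]
  · intro X
    simp only [splitProd, splitCoprod, hF', Functor.map_comp, Category.assoc]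
    slice_lhs 4 6 => rw [← hC2 X]
    slice_lhs 5 6 => rw [← F.map_comp, Category.assoc, split₂ X, Category.comp_id]
    slice_lhs 3 4 => rw [frob₂ X]
    slice_lhs 4 5 => rw [← hmnat (p.app X)]
    slice_rhs 5 7 => rw [henat (p.app (F'.obj X))]
    slice_rhs 7 8 => rw [← F.map_comp]
    slice_rhs 5 7 => rw [← henat (p.app (F'.obj X) ≫ i.app (F'.obj X))]
    slice_rhs 6 8 => rw [hM1 (F'.obj X)]
    slice_rhs 5 6 => rw [hM2 (F'.obj X)]
    slice_rhs 7 8 => rw [split₂ (F'.obj X)]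
    simp only [Category.assoc, Category.id_comp, Category.comp_id]

end
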